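/- Let v : ℤⁿ → [1,∞) be a submultiplicative weight, fix j ∈ {1, …, n}, and set C_j = {y ∈ ℤⁿ : σ(y, e_j) = σ(e_j, y)}, where e_j is the j-th standard basis vector. For f ∈ ℓ¹_v(ℤⁿ) define the averages J_m(f) = (1/m) Σ_{k=1}^m (δ_{e_j}*)^{♮k} ♮ f ♮ (δ_{e_j})^{♮k}, where δ_{e_j}* = conj(σ(e_j, −e_j)) δ_{−e_j} and the powers are k-fold twisted convolution powers. Then J_m(f) converges in the ℓ¹_v-norm, as m → ∞, to the function f · 1_{C_j} (the pointwise product of f with the indicator function of C_j). -/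

import Mathlib

/-!
Conjugating by `δ_{e_j}^{♮k}` multiplies `f` pointwise by `μ(x)^k`, where
`μ(x) = σ(x, e_j) / σ(e_j, x)` has modulus one, so `J_m(f) = A_m · f` with
`A_m(x) = (1/m) Σ_{k=1}^m μ(x)^k`. For a point `z` of the unit circle the averages
`(1/m) Σ_{k=1}^m z^k` are bounded by one and tend to `1` if `z = 1` and to `0` otherwise
(geometric sums), so `A_m → 1_{C_j}` boundedly and pointwise, and dominated convergence in
`ℓ¹_v` finishes the proof.
-/

open scoped BigOperators
open Filter Topology

noncomputable section

/-- The cocycle σ(l,m) = ∏_{1 ≤ j < k ≤ n} θ_{k,j}^{l_k m_j}. -/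
def coc {n : ℕ} (θ : Fin n → Fin n → ℂ) (l m : Fin n → ℤ) : ℂ :=
  ∏ p ∈ Finset.univ.filter (fun p : Fin n × Fin n => p.1 < p.2), θ p.2 p.1 ^ (l p.2 * m p.1)

/-- Twisted convolution (f ♮ g)(x) = Σ_y f(y) g(x−y) σ(y, x−y). -/
def tconv {n : ℕ} (σ : (Fin n → ℤ) → (Fin n → ℤ) → ℂ) (f g : (Fin n → ℤ) → ℂ) :
    (Fin n → ℤ) → ℂ :=
  fun x => ∑' y, f y * g (x - y) * σ y (x - y)

/-- δ_y, the indicator of {y}. -/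
def delta {n : ℕ} (y : Fin n → ℤ) : (Fin n → ℤ) → ℂ := fun x => if x = y then 1 else 0

/-- m-fold twisted convolution power, with f^{♮0} = δ_0. -/
def tpow {n : ℕ} (σ : (Fin n → ℤ) → (Fin n → ℤ) → ℂ) (f : (Fin n → ℤ) → ℂ) :
    ℕ → ((Fin n → ℤ) → ℂ)
  | 0 => delta 0
  | m + 1 => tconv σ f (tpow σ f m)

section Cocycle

variable {n : ℕ} (θ : Fin n → Fin n → ℂ)

theorem coc_zsmul_left (k : ℤ) (l m : Fin n → ℤ) : coc θ (k • l) m = coc θ l m ^ k := by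
  rw [coc, coc, ← Finset.prod_zpow]
  refine Finset.prod_congr rfl fun p _ => ?_
  rw [Pi.smul_apply, smul_eq_mul, mul_assoc, mul_comm k, zpow_mul]

theorem coc_zsmul_right (k : ℤ) (l m : Fin n → ℤ) : coc θ l (k • m) = coc θ l m ^ k := by
  rw [coc, coc, ← Finset.prod_zpow]
  refine Finset.prod_congr rfl fun p _ => ?_
  rw [Pi.smul_apply, smul_eq_mul, mul_left_comm, mul_comm k, zpow_mul]

theorem coc_neg_left (l m : Fin n → ℤ) : coc θ (-l) m = (coc θ l m)⁻¹ := by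
  rw [← neg_one_zsmul, coc_zsmul_left, zpow_neg_one]

theorem coc_add_left (hθ : ∀ a b, θ a b ≠ 0) (l l' m : Fin n → ℤ) :
    coc θ (l + l') m = coc θ l m * coc θ l' m := by
  rw [coc, coc, coc, ← Finset.prod_mul_distrib]
  refine Finset.prod_congr rfl fun p _ => ?_
  rw [Pi.add_apply, add_mul, zpow_add₀ (hθ _ _)]

theorem norm_coc (hθ : ∀ a b, ‖θ a b‖ = 1) (l m : Fin n → ℤ) : ‖coc θ l m‖ = 1 := by
  rw [coc, norm_prod]
  exact Finset.prod_eq_one fun p _ => by rw [norm_zpow, hθ, one_zpow]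

theorem coc_eq_one_of_support_subset {j : Fin n} {l m : Fin n → ℤ}
    (hl : Function.support l ⊆ {j}) (hm : Function.support m ⊆ {j}) : coc θ l m = 1 := by
  refine Finset.prod_eq_one fun p hp => ?_
  have hlt : p.1 < p.2 := (Finset.mem_filter.mp hp).2
  suffices l p.2 * m p.1 = 0 by rw [this, zpow_zero]
  by_contra h
  obtain ⟨hl2, hm1⟩ := mul_ne_zero_iff.mp h
  exact hlt.ne ((hm hm1).trans (hl hl2).symm)

/-- Conjugation by `δ_l` multiplies by this ratio: the correction term `σ(-l, l)` vanishes
because `l` lives on a single coordinate. -/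
theorem coc_neg_mul_coc_sub (hθ : ∀ a b, θ a b ≠ 0) {j : Fin n} {l : Fin n → ℤ}
    (hl : Function.support l ⊆ {j}) (x : Fin n → ℤ) :
    coc θ (-l) x * coc θ (x - l) l = coc θ x l / coc θ l x := by
  have hnl : Function.support (-l) ⊆ {j} := (Function.support_neg l).trans_subset hl
  rw [sub_eq_add_neg, coc_add_left θ hθ, coc_eq_one_of_support_subset θ hnl hl, mul_one,
    coc_neg_left, div_eq_mul_inv, mul_comm]

end Cocycle

section TwistedConvolution

variable {n : ℕ} (σ : (Fin n → ℤ) → (Fin n → ℤ) → ℂ)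

theorem tconv_delta_left (a : Fin n → ℤ) (g : (Fin n → ℤ) → ℂ) (x : Fin n → ℤ) :
    tconv σ (delta a) g x = σ a (x - a) * g (x - a) := by
  rw [tconv, tsum_eq_single a fun y hy => by simp [delta, hy]]
  simp [delta, mul_comm]

theorem tconv_delta_right (a : Fin n → ℤ) (g : (Fin n → ℤ) → ℂ) (x : Fin n → ℤ) :
    tconv σ g (delta a) x = σ (x - a) a * g (x - a) := by
  rw [tconv, tsum_eq_single (x - a) fun y hy => ?_]
  · simp [delta, mul_comm]
  · have : x - y ≠ a := fun h => hy (by rw [← h, sub_sub_cancel])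
    simp [delta, this]

theorem tpow_delta (a : Fin n → ℤ) (ha : ∀ k : ℕ, σ a (k • a) = 1) (k : ℕ) :
    tpow σ (delta a) k = delta (k • a) := by
  induction k with
  | zero => simp [tpow]
  | succ k ih =>
    funext x
    have hsub : x - a = k • a ↔ x = (k + 1) • a := by rw [succ_nsmul, sub_eq_iff_eq_add]
    rw [tpow, tconv_delta_left, ih, delta, delta]
    by_cases hx : x = (k + 1) • a
    · rw [if_pos (hsub.mpr hx), if_pos hx, hsub.mpr hx, ha, mul_one]
    · rw [if_neg (mt hsub.mp hx), if_neg hx, mul_zero]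

theorem tconv_tconv_delta_neg_delta (a : Fin n → ℤ) (f : (Fin n → ℤ) → ℂ) (x : Fin n → ℤ) :
    tconv σ (tconv σ (delta (-a)) f) (delta a) x = σ (-a) x * σ (x - a) a * f x := by
  rw [tconv_delta_right, tconv_delta_left, sub_neg_eq_add, sub_add_cancel]
  ring

end TwistedConvolution

theorem tconv_tconv_tpow_delta_single {n : ℕ} {θ : Fin n → Fin n → ℂ} (hθ : ∀ a b, θ a b ≠ 0)
    (j : Fin n) (f : (Fin n → ℤ) → ℂ) (k : ℕ) (x : Fin n → ℤ) :
    tconv (coc θ) (tconv (coc θ) (tpow (coc θ) (delta (-Pi.single j 1)) k) f)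
        (tpow (coc θ) (delta (Pi.single j 1)) k) x =
      (coc θ x (Pi.single j 1) / coc θ (Pi.single j 1) x) ^ k * f x := by
  set e : Fin n → ℤ := Pi.single j 1
  have hsupp : ∀ c : ℤ, Function.support (c • e) ⊆ {j} := fun c =>
    (Function.support_const_smul_subset c e).trans Pi.support_single_subset
  have hsmul : ∀ (k : ℕ) (c : ℤ), k • c • e = ((k : ℤ) * c) • e := fun k c => by
    rw [← natCast_zsmul, smul_smul]
  have hpow : ∀ c : ℤ, tpow (coc θ) (delta (c • e)) k = delta (((k : ℤ) * c) • e) := fun c => by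
    rw [tpow_delta _ _ fun k => by rw [hsmul, coc_eq_one_of_support_subset θ (hsupp c) (hsupp _)],
      hsmul]
  rw [← neg_one_zsmul e, hpow, mul_neg_one, neg_smul, ← one_zsmul e, hpow, mul_one, one_zsmul,
    tconv_tconv_delta_neg_delta, coc_neg_mul_coc_sub θ hθ (hsupp k), coc_zsmul_left,
    coc_zsmul_right, zpow_natCast, zpow_natCast, div_pow]

theorem norm_average_pow_le {z : ℂ} (hz : ‖z‖ ≤ 1) (m : ℕ) :
    ‖(1 : ℂ) / m * ∑ k ∈ Finset.Icc 1 m, z ^ k‖ ≤ 1 := by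
  rcases Nat.eq_zero_or_pos m with rfl | hm
  · simp
  have hsum : ‖∑ k ∈ Finset.Icc 1 m, z ^ k‖ ≤ m := by
    calc ‖∑ k ∈ Finset.Icc 1 m, z ^ k‖ ≤ ∑ k ∈ Finset.Icc 1 m, (1 : ℝ) :=
          norm_sum_le_of_le _ fun k _ => by rw [norm_pow]; exact pow_le_one₀ (norm_nonneg z) hz
      _ = m := by simp
  rw [norm_mul, norm_div, norm_one, Complex.norm_natCast, one_div, inv_mul_le_iff₀ (by positivity),
    mul_one]
  exact hsum

theorem tendsto_average_pow {z : ℂ} (hz : ‖z‖ = 1) :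
    Tendsto (fun m : ℕ => (1 : ℂ) / m * ∑ k ∈ Finset.Icc 1 m, z ^ k) atTop
      (𝓝 (if z = 1 then 1 else 0)) := by
  by_cases h1 : z = 1
  · rw [if_pos h1]
    refine tendsto_const_nhds.congr' ?_
    filter_upwards [eventually_ge_atTop 1] with m hm
    have : (m : ℂ) ≠ 0 := Nat.cast_ne_zero.mpr (by omega)
    simp [h1, this]
  rw [if_neg h1]
  have hd : 0 < ‖z - 1‖ := norm_pos_iff.mpr (sub_ne_zero.mpr h1)
  refine squeeze_zero_norm (fun m => ?_) (tendsto_const_div_atTop_nhds_zero_nat (2 / ‖z - 1‖))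
  rw [← Finset.Ico_add_one_right_eq_Icc, geom_sum_Ico h1 (by omega), norm_mul, norm_div,
    norm_div, norm_one, Complex.norm_natCast, one_div, ← div_eq_inv_mul]
  gcongr
  calc ‖z ^ (m + 1) - z ^ 1‖ ≤ ‖z ^ (m + 1)‖ + ‖z ^ 1‖ := norm_sub_le _ _
    _ = 2 := by rw [norm_pow, norm_pow, hz, one_pow, one_pow]; norm_num

theorem tendsto_tsum_norm_mul_mul_of_tendsto_zero {ι X R : Type*} [NormedRing R]
    {l : Filter ι} {d : ι → X → R} {f : X → R} {w : X → ℝ} {C : ℝ}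
    (hf : Summable fun x => ‖f x‖ * w x) (hd : ∀ x, Tendsto (fun i => d i x) l (𝓝 0))
    (hC : ∀ i x, ‖d i x‖ ≤ C) :
    Tendsto (fun i => ∑' x, ‖d i x * f x‖ * w x) l (𝓝 0) := by
  have hlim : ∀ x, Tendsto (fun i => ‖d i x * f x‖ * w x) l (𝓝 0) := fun x => by
    simpa using (((hd x).mul_const (f x)).norm.mul_const (w x))
  have hbound : ∀ i x, ‖‖d i x * f x‖ * w x‖ ≤ C * |‖f x‖ * w x| := fun i x => by
    rw [norm_mul, norm_norm, Real.norm_eq_abs, abs_mul, abs_norm, ← mul_assoc]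
    gcongr
    exact (norm_mul_le _ _).trans (mul_le_mul_of_nonneg_right (hC i x) (norm_nonneg _))
  simpa using tendsto_tsum_of_dominated_convergence (hf.abs.mul_left C) hlim
    (Eventually.of_forall (hbound ·))

theorem statement14_general {n : ℕ} (θ : Fin n → Fin n → ℂ)
    (hUnit : ∀ j k, ‖θ j k‖ = 1)
    (v : (Fin n → ℤ) → ℝ)
    (j : Fin n)
    (f : (Fin n → ℤ) → ℂ)
    (hf : Summable (fun x => ‖f x‖ * v x)) :
    Filter.Tendsto
      (fun m : ℕ => ∑' x : Fin n → ℤ,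
        ‖((1 : ℂ) / (m : ℂ)) *
            (∑ k ∈ Finset.Icc 1 m,
              tconv (coc θ)
                (tconv (coc θ)
                  (tpow (coc θ)
                    (fun y =>
                      starRingEnd ℂ
                          (coc θ (Pi.single j (1 : ℤ)) (-(Pi.single j (1 : ℤ)))) *
                        delta (-(Pi.single j (1 : ℤ))) y) k)
                  f)
                (tpow (coc θ) (delta (Pi.single j (1 : ℤ))) k) x)
          - (if coc θ x (Pi.single j (1 : ℤ)) = coc θ (Pi.single j (1 : ℤ)) x
              then f x else 0)‖ * v x)
      atTop (𝓝 0) := by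
  have hθ : ∀ a b, θ a b ≠ 0 := fun a b => norm_ne_zero_iff.mp (by rw [hUnit]; exact one_ne_zero)
  have hstar : coc θ (Pi.single j 1) (-Pi.single j 1) = 1 :=
    coc_eq_one_of_support_subset θ Pi.support_single_subset
      ((Function.support_neg _).trans_subset Pi.support_single_subset)
  set μ : (Fin n → ℤ) → ℂ := fun x => coc θ x (Pi.single j 1) / coc θ (Pi.single j 1) x
  have hμ : ∀ x, ‖μ x‖ = 1 := fun x => by simp only [μ, norm_div, norm_coc θ hUnit, div_one]
  have hind : ∀ x, (if coc θ x (Pi.single j 1) = coc θ (Pi.single j 1) x then f x else 0) =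
      (if μ x = 1 then 1 else 0) * f x := fun x => by
    have hne : coc θ (Pi.single j 1) x ≠ 0 := norm_ne_zero_iff.mp (by simp [norm_coc θ hUnit])
    simp only [μ, div_eq_one_iff_eq hne, ite_mul, one_mul, zero_mul]
  simp only [hstar, map_one, one_mul, tconv_tconv_tpow_delta_single hθ, hind, ← Finset.sum_mul,
    ← mul_assoc, ← sub_mul]
  refine tendsto_tsum_norm_mul_mul_of_tendsto_zero (C := 2) hf
    (fun x => tendsto_sub_nhds_zero_iff.mpr (tendsto_average_pow (hμ x))) fun m x => ?_
  calc _ ≤ 1 + 1 := (norm_sub_le _ _).trans (add_le_add (norm_average_pow_le (hμ x).le m)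
        (by split_ifs <;> simp))
    _ = 2 := by norm_num

/-- with e_j the j-th standard basis vector,
δ_{e_j}* = conj(σ(e_j, −e_j)) δ_{−e_j}, and C_j = {y : σ(y,e_j) = σ(e_j,y)}, the averages
J_m(f) = (1/m) Σ_{k=1}^m (δ_{e_j}*)^{♮k} ♮ f ♮ (δ_{e_j})^{♮k} converge in ℓ¹_v-norm to
f · 1_{C_j}. -/
theorem statement14 {n : ℕ} (θ : Fin n → Fin n → ℂ)
    (hUnit : ∀ j k, ‖θ j k‖ = 1)
    (hHerm : ∀ j k, θ k j = starRingEnd ℂ (θ j k))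
    (hDiag : ∀ j, θ j j = 1)
    (v : (Fin n → ℤ) → ℝ)
    (hv1 : ∀ x, 1 ≤ v x)
    (hvsub : ∀ x y, v (x + y) ≤ v x * v y)
    (j : Fin n)
    (f : (Fin n → ℤ) → ℂ)
    (hf : Summable (fun x => ‖f x‖ * v x)) :
    Filter.Tendsto
      (fun m : ℕ => ∑' x : Fin n → ℤ,
        ‖((1 : ℂ) / (m : ℂ)) *
            (∑ k ∈ Finset.Icc 1 m,
              tconv (coc θ)
                (tconv (coc θ)
                  (tpow (coc θ)
                    (fun y =>
                      starRingEnd ℂ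
                          (coc θ (Pi.single j (1 : ℤ)) (-(Pi.single j (1 : ℤ)))) *
                        delta (-(Pi.single j (1 : ℤ))) y) k)
                  f)
                (tpow (coc θ) (delta (Pi.single j (1 : ℤ))) k) x)
          - (if coc θ x (Pi.single j (1 : ℤ)) = coc θ (Pi.single j (1 : ℤ)) x
              then f x else 0)‖ * v x)
      atTop (𝓝 0) :=
  statement14_general θ hUnit v j f hf
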